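/- Let n, k, r be integers with k, r ≥ 2 and n ≥ k + 1. The r-uniform hypergraph H_L(n; k, r) = K_k^r ∨_r (K_{n−k}^r)^c is vertex-k-maximal. -/

import Mathlib

/-- A finite hypergraph: a finite vertex set together with a finite set of
non-empty edges, each a subset of the vertex set. -/
structure FinHypergraph where
  verts : Finset ℕ
  edges : Finset (Finset ℕ)
  edge_sub : ∀ e ∈ edges, e ⊆ verts
  edge_nonempty : ∀ e ∈ edges, e.Nonempty

namespace FinHypergraph

/-- `H` is `r`-uniform if every edge has cardinality `r`. -/
def IsUniform (H : FinHypergraph) (r : ℕ) : Prop := ∀ e ∈ H.edges, e.card = r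

/-- `H'` is a subhypergraph of `H`. -/
def IsSub (H' H : FinHypergraph) : Prop := H'.verts ⊆ H.verts ∧ H'.edges ⊆ H.edges

/-- Two vertices are adjacent if some edge contains both. -/
def Adj (H : FinHypergraph) (u v : ℕ) : Prop := ∃ e ∈ H.edges, u ∈ e ∧ v ∈ e

/-- `H` is connected if every pair of vertices is joined by a path
(equivalently, a walk, i.e. is reachable via the adjacency relation). -/
def Connected (H : FinHypergraph) : Prop :=
  ∀ u ∈ H.verts, ∀ v ∈ H.verts, Relation.ReflTransGen H.Adj u v

/-- The subhypergraph of `H` induced by the vertex set `Y`. -/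
def induce (H : FinHypergraph) (Y : Finset ℕ) : FinHypergraph where
  verts := H.verts ∩ Y
  edges := H.edges.filter (fun e => e ⊆ Y)
  edge_sub := by
    intro e he
    simp only [Finset.mem_filter] at he
    exact Finset.subset_inter (H.edge_sub e he.1) he.2
  edge_nonempty := by
    intro e he
    simp only [Finset.mem_filter] at he
    exact H.edge_nonempty e he.1

/-- `X` is a vertex-cut of `H` if deleting `X` leaves a disconnected hypergraph. -/
def IsVertexCut (H : FinHypergraph) (X : Finset ℕ) : Prop :=
  X ⊆ H.verts ∧ ¬ (H.induce (H.verts \ X)).Connected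

open Classical in
/-- The vertex-connectivity of `H`: the minimum cardinality of a vertex-cut if one
exists, and `|V(H)| - 1` otherwise. -/
noncomputable def kappa (H : FinHypergraph) : ℕ :=
  if ∃ X, H.IsVertexCut X then sInf {m | ∃ X, H.IsVertexCut X ∧ X.card = m}
  else H.verts.card - 1

/-- `κ̄(H)`: the maximum vertex-connectivity over all subhypergraphs of `H`. -/
noncomputable def kappaBar (H : FinHypergraph) : ℕ :=
  sSup {m | ∃ H' : FinHypergraph, H'.IsSub H ∧ H'.kappa = m}

/-- `H + e`: add the edge `e` (a non-empty subset of the vertices) to `H`. -/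
def addEdge (H : FinHypergraph) (e : Finset ℕ) : FinHypergraph where
  verts := H.verts
  edges := if e ⊆ H.verts ∧ e.Nonempty then insert e H.edges else H.edges
  edge_sub := by
    intro f hf
    split at hf
    · rcases Finset.mem_insert.mp hf with rfl | hf
      · exact (by assumption : f ⊆ H.verts ∧ f.Nonempty).1
      · exact H.edge_sub f hf
    · exact H.edge_sub f hf
  edge_nonempty := by
    intro f hf
    split at hf
    · rcases Finset.mem_insert.mp hf with rfl | hf
      · exact (by assumption : f ⊆ H.verts ∧ f.Nonempty).2
      · exact H.edge_nonempty f hf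
    · exact H.edge_nonempty f hf

/-- `H + F`: add a set `F` of edges to `H`. -/
def addEdges (H : FinHypergraph) (F : Finset (Finset ℕ)) : FinHypergraph where
  verts := H.verts
  edges := H.edges ∪ F.filter (fun e => e ⊆ H.verts ∧ e.Nonempty)
  edge_sub := by
    intro f hf
    rcases Finset.mem_union.mp hf with hf | hf
    · exact H.edge_sub f hf
    · exact (Finset.mem_filter.mp hf).2.1
  edge_nonempty := by
    intro f hf
    rcases Finset.mem_union.mp hf with hf | hf
    · exact H.edge_nonempty f hf
    · exact (Finset.mem_filter.mp hf).2.2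

/-- `H` is vertex-`k`-maximal (as an `r`-uniform hypergraph): `κ̄(H) ≤ k`, but adding
any edge of the complement `H^c` creates a subhypergraph of connectivity at least `k + 1`. -/
def VertexKMaximal (H : FinHypergraph) (r k : ℕ) : Prop :=
  H.IsUniform r ∧ H.kappaBar ≤ k ∧
    ∀ e : Finset ℕ, e ⊆ H.verts → e.card = r → e ∉ H.edges →
      k + 1 ≤ (H.addEdge e).kappaBar

/-- The complete `r`-uniform hypergraph on the vertex set `V`. -/
def completeHG (V : Finset ℕ) (r : ℕ) : FinHypergraph where
  verts := V
  edges := (V.powersetCard r).filter (fun e => e.Nonempty)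
  edge_sub := by
    intro e he
    simp only [Finset.mem_filter, Finset.mem_powersetCard] at he
    exact he.1.1
  edge_nonempty := by
    intro e he
    exact (Finset.mem_filter.mp he).2

/-- The hypergraph on vertex set `V` with no edges. -/
def emptyHG (V : Finset ℕ) : FinHypergraph where
  verts := V
  edges := ∅
  edge_sub := by simp
  edge_nonempty := by simp

/-- The `r`-join `H₁ ∨_r H₂`: the union of `H₁` and `H₂` together with all
`r`-element subsets of `V(H₁) ∪ V(H₂)` meeting both `V(H₁)` and `V(H₂)`. -/
def rJoin (H1 H2 : FinHypergraph) (r : ℕ) : FinHypergraph where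
  verts := H1.verts ∪ H2.verts
  edges := H1.edges ∪ H2.edges ∪
    ((H1.verts ∪ H2.verts).powersetCard r).filter
      (fun e => (e ∩ H1.verts).Nonempty ∧ (e ∩ H2.verts).Nonempty)
  edge_sub := by
    intro e he
    rcases Finset.mem_union.mp he with he | he
    · rcases Finset.mem_union.mp he with he | he
      · exact (H1.edge_sub e he).trans Finset.subset_union_left
      · exact (H2.edge_sub e he).trans Finset.subset_union_right
    · exact (Finset.mem_powersetCard.mp (Finset.mem_filter.mp he).1).1
  edge_nonempty := by
    intro e he
    rcases Finset.mem_union.mp he with he | he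
    · rcases Finset.mem_union.mp he with he | he
      · exact H1.edge_nonempty e he
      · exact H2.edge_nonempty e he
    · obtain ⟨x, hx⟩ := (Finset.mem_filter.mp he).2.1
      exact ⟨x, (Finset.mem_inter.mp hx).1⟩

/-- The union of two hypergraphs. -/
def hUnion (H1 H2 : FinHypergraph) : FinHypergraph where
  verts := H1.verts ∪ H2.verts
  edges := H1.edges ∪ H2.edges
  edge_sub := by
    intro e he
    rcases Finset.mem_union.mp he with he | he
    · exact (H1.edge_sub e he).trans Finset.subset_union_left
    · exact (H2.edge_sub e he).trans Finset.subset_union_right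
  edge_nonempty := by
    intro e he
    rcases Finset.mem_union.mp he with he | he
    · exact H1.edge_nonempty e he
    · exact H2.edge_nonempty e he

/-- The union of the hypergraphs `f 0, …, f (m-1)`. -/
def unionOver (m : ℕ) (f : ℕ → FinHypergraph) : FinHypergraph where
  verts := (Finset.range m).biUnion (fun i => (f i).verts)
  edges := (Finset.range m).biUnion (fun i => (f i).edges)
  edge_sub := by
    intro e he
    obtain ⟨i, hi, hei⟩ := Finset.mem_biUnion.mp he
    exact ((f i).edge_sub e hei).trans (Finset.subset_biUnion_of_mem (fun i => (f i).verts) hi)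
  edge_nonempty := by
    intro e he
    obtain ⟨i, _, hei⟩ := Finset.mem_biUnion.mp he
    exact (f i).edge_nonempty e hei

/-- `C` is a component of `G`: a maximal connected subhypergraph. -/
def IsComponent (G C : FinHypergraph) : Prop :=
  C.IsSub G ∧ C.Connected ∧
    ∀ C' : FinHypergraph, C'.IsSub G → C'.Connected → C.IsSub C' → C' = C

/-- `(S, H₁, H₂)` is a separation triple of `H`: `S` is a minimum vertex-cut,
`H₁ = H[S ∪ V(C₁)]` and `H₂ = H[S ∪ V(C₂)]`, where `C₁` is a component of `H - S`
and `C₂ = H - (S ∪ V(C₁))`. -/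
def IsSeparationTriple (H : FinHypergraph) (S : Finset ℕ) (H1 H2 : FinHypergraph) : Prop :=
  H.IsVertexCut S ∧ (∀ X : Finset ℕ, H.IsVertexCut X → S.card ≤ X.card) ∧
    ∃ C1 : FinHypergraph, IsComponent (H.induce (H.verts \ S)) C1 ∧
      H1 = H.induce (S ∪ C1.verts) ∧
      H2 = H.induce (S ∪ (H.verts \ (S ∪ C1.verts)))

end FinHypergraph

/-!
Every edge of `H_L = K_k^r ∨_r (K_{n-k}^r)^c` meets the `k`-set `A`, so in any subhypergraph
with at least `k + 2` vertices the vertices of `A` form a cut of size at most `k`, while smaller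
subhypergraphs have connectivity at most `k` anyway. Conversely, a missing edge `e` is an
`r`-subset disjoint from `A`; after adding it, the subhypergraph induced on `A ∪ e` stays
connected after deleting any `k` vertices: a surviving vertex of `A` lies in a common edge with
every other survivor, and if no vertex of `A` survives, the survivors are exactly `e`.
-/

namespace FinHypergraph

lemma isSub_refl (H : FinHypergraph) : H.IsSub H := ⟨subset_rfl, subset_rfl⟩

lemma induce_isSub (H : FinHypergraph) (Y : Finset ℕ) : (H.induce Y).IsSub H :=
  ⟨Finset.inter_subset_left, Finset.filter_subset _ _⟩

lemma induce_verts_of_subset {H : FinHypergraph} {Y : Finset ℕ} (hY : Y ⊆ H.verts) :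
    (H.induce Y).verts = Y :=
  Finset.inter_eq_right.mpr hY

lemma mem_induce_edges {H : FinHypergraph} {Y f : Finset ℕ} :
    f ∈ (H.induce Y).edges ↔ f ∈ H.edges ∧ f ⊆ Y :=
  Finset.mem_filter

lemma mem_addEdge_edges {H : FinHypergraph} {e f : Finset ℕ} (he : e ⊆ H.verts)
    (hne : e.Nonempty) : f ∈ (H.addEdge e).edges ↔ f = e ∨ f ∈ H.edges := by
  simp only [addEdge, if_pos (And.intro he hne), Finset.mem_insert]

lemma Adj.symm {H : FinHypergraph} {u v : ℕ} : H.Adj u v → H.Adj v u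
  | ⟨e, he, hu, hv⟩ => ⟨e, he, hv, hu⟩

lemma connected_of_forall_adj {G : FinHypergraph} {a : ℕ}
    (h : ∀ v ∈ G.verts, v ≠ a → G.Adj a v) : G.Connected := by
  have hreach : ∀ v ∈ G.verts,
      Relation.ReflTransGen G.Adj a v ∧ Relation.ReflTransGen G.Adj v a := fun v hv => by
    by_cases hva : v = a
    · rw [hva]; exact ⟨.refl, .refl⟩
    · exact ⟨.single (h v hv hva), .single (h v hv hva).symm⟩
  exact fun u hu v hv => (hreach u hu).2.trans (hreach v hv).1

lemma not_connected_of_edges_eq_empty {G : FinHypergraph} (hG : G.edges = ∅) {u v : ℕ}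
    (hu : u ∈ G.verts) (hv : v ∈ G.verts) (huv : u ≠ v) : ¬ G.Connected := fun h => by
  rcases (h u hu v hv).cases_tail with rfl | ⟨w, -, f, hf, -⟩
  · exact huv rfl
  · simp [hG] at hf

lemma IsVertexCut.card_add_two_le {H : FinHypergraph} {X : Finset ℕ} (h : H.IsVertexCut X) :
    X.card + 2 ≤ H.verts.card := by
  obtain ⟨hX, hnc⟩ := h
  have htwo : 1 < (H.verts \ X).card := by
    by_contra! hle
    refine hnc fun u hu v hv => ?_
    rw [induce_verts_of_subset Finset.sdiff_subset] at hu hv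
    rw [Finset.card_le_one.mp hle u hu v hv]
  have := Finset.card_sdiff_add_card_eq_card hX
  omega

lemma kappa_le_card_of_isVertexCut {H : FinHypergraph} {X : Finset ℕ} (h : H.IsVertexCut X) :
    H.kappa ≤ X.card := by
  classical
  rw [kappa, if_pos ⟨X, h⟩]
  exact Nat.sInf_le ⟨X, h, rfl⟩

lemma kappa_le_card_sub_one (H : FinHypergraph) : H.kappa ≤ H.verts.card - 1 := by
  classical
  by_cases hc : ∃ X, H.IsVertexCut X
  · obtain ⟨X, hX⟩ := hc
    have := kappa_le_card_of_isVertexCut hX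
    have := hX.card_add_two_le
    omega
  · rw [kappa, if_neg hc]

lemma le_kappa {H : FinHypergraph} {c : ℕ} (hcut : ∀ X, H.IsVertexCut X → c ≤ X.card)
    (hcard : c ≤ H.verts.card - 1) : c ≤ H.kappa := by
  classical
  unfold kappa
  split_ifs with hc
  · obtain ⟨X, hX⟩ := hc
    exact le_csInf ⟨X.card, X, hX, rfl⟩ fun m ⟨Y, hY, hm⟩ => hm ▸ hcut Y hY
  · exact hcard

lemma kappaBar_le {H : FinHypergraph} {k : ℕ}
    (h : ∀ H' : FinHypergraph, H'.IsSub H → H'.kappa ≤ k) : H.kappaBar ≤ k :=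
  csSup_le ⟨H.kappa, H, H.isSub_refl, rfl⟩ fun _ ⟨H', hs, hm⟩ => hm ▸ h H' hs

lemma kappa_le_kappaBar {H H' : FinHypergraph} (hs : H'.IsSub H) : H'.kappa ≤ H.kappaBar := by
  refine le_csSup ⟨H.verts.card, ?_⟩ ⟨H', hs, rfl⟩
  rintro m ⟨G, hG, rfl⟩
  have := G.kappa_le_card_sub_one
  have := Finset.card_le_card hG.1
  omega

section Transversal

variable {H : FinHypergraph} {A : Finset ℕ}

lemma isVertexCut_inter_of_forall_edge_meets (hA : ∀ f ∈ H.edges, (f ∩ A).Nonempty)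
    (hcard : (H.verts ∩ A).card + 2 ≤ H.verts.card) : H.IsVertexCut (H.verts ∩ A) := by
  refine ⟨Finset.inter_subset_left, ?_⟩
  have hrest : H.verts \ (H.verts ∩ A) = H.verts \ A := Finset.sdiff_inter_self_left _ _
  have hno_edges : (H.induce (H.verts \ (H.verts ∩ A))).edges = ∅ := by
    refine Finset.eq_empty_iff_forall_notMem.mpr fun f hf => ?_
    rw [mem_induce_edges, hrest] at hf
    obtain ⟨x, hx⟩ := hA f hf.1
    exact (Finset.mem_sdiff.mp (hf.2 (Finset.mem_inter.mp hx).1)).2 (Finset.mem_inter.mp hx).2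
  have htwo : 1 < (H.verts \ (H.verts ∩ A)).card := by
    have := Finset.card_sdiff_add_card_eq_card
      (Finset.inter_subset_left (s₁ := H.verts) (s₂ := A))
    omega
  obtain ⟨u, hu, v, hv, huv⟩ := Finset.one_lt_card.mp htwo
  rw [← induce_verts_of_subset Finset.sdiff_subset] at hu hv
  exact not_connected_of_edges_eq_empty hno_edges hu hv huv

lemma kappa_le_card_of_forall_edge_meets (hA : ∀ f ∈ H.edges, (f ∩ A).Nonempty) :
    H.kappa ≤ A.card := by
  have hinter := Finset.card_le_card (Finset.inter_subset_right (s₁ := H.verts) (s₂ := A))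
  by_cases hcard : (H.verts ∩ A).card + 2 ≤ H.verts.card
  · exact (kappa_le_card_of_isVertexCut
      (isVertexCut_inter_of_forall_edge_meets hA hcard)).trans hinter
  · have := H.kappa_le_card_sub_one
    omega

lemma kappaBar_le_card_of_forall_edge_meets (hA : ∀ f ∈ H.edges, (f ∩ A).Nonempty) :
    H.kappaBar ≤ A.card :=
  kappaBar_le fun _ hs => kappa_le_card_of_forall_edge_meets fun f hf => hA f (hs.2 hf)

end Transversal

lemma connected_induce_of_card_le {G : FinHypergraph} {A e W : Finset ℕ}
    (hV : G.verts = A ∪ e) (he : e ∈ G.edges)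
    (hcomplete : ∀ f ⊆ G.verts, f.card = e.card → (f ∩ A).Nonempty → f ∈ G.edges)
    (hr : 2 ≤ e.card) (hW : W ⊆ G.verts) (hWcard : e.card ≤ W.card) :
    (G.induce W).Connected := by
  have hWv := induce_verts_of_subset hW
  by_cases hWA : (W ∩ A).Nonempty
  · obtain ⟨a, ha⟩ := hWA
    obtain ⟨haW, haA⟩ := Finset.mem_inter.mp ha
    refine connected_of_forall_adj (a := a) fun v hv _ => ?_
    rw [hWv] at hv
    have hpair : ({a, v} : Finset ℕ) ⊆ W :=
      Finset.insert_subset haW (Finset.singleton_subset_iff.mpr hv)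
    obtain ⟨f, hpf, hfW, hfcard⟩ :=
      Finset.exists_subsuperset_card_eq hpair (Finset.card_le_two.trans hr) hWcard
    have haf : a ∈ f := hpf (Finset.mem_insert_self a _)
    have hf : f ∈ G.edges :=
      hcomplete f (hfW.trans hW) hfcard ⟨a, Finset.mem_inter.mpr ⟨haf, haA⟩⟩
    exact ⟨f, mem_induce_edges.mpr ⟨hf, hfW⟩, haf, hpf (by simp)⟩
  · have hWe : W ⊆ e := fun x hx => by
      rcases Finset.mem_union.mp (hV ▸ hW hx) with hxA | hxe
      · exact absurd ⟨x, Finset.mem_inter.mpr ⟨hx, hxA⟩⟩ hWA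
      · exact hxe
    obtain rfl : W = e := Finset.eq_of_subset_of_card_le hWe hWcard
    obtain ⟨a, ha⟩ : W.Nonempty := Finset.card_pos.mp (by omega)
    refine connected_of_forall_adj (a := a) fun v hv _ => ?_
    rw [hWv] at hv
    exact ⟨W, mem_induce_edges.mpr ⟨he, subset_rfl⟩, ha, hv⟩

lemma card_add_one_le_kappa {G : FinHypergraph} {A e : Finset ℕ} (hAe : Disjoint A e)
    (hV : G.verts = A ∪ e) (he : e ∈ G.edges)
    (hcomplete : ∀ f ⊆ G.verts, f.card = e.card → (f ∩ A).Nonempty → f ∈ G.edges)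
    (hr : 2 ≤ e.card) : A.card + 1 ≤ G.kappa := by
  have hVcard : G.verts.card = A.card + e.card := by rw [hV, Finset.card_union_of_disjoint hAe]
  refine le_kappa (fun X hX => ?_) (by omega)
  by_contra! hlt
  refine hX.2 (connected_induce_of_card_le hV he hcomplete hr Finset.sdiff_subset ?_)
  have := Finset.card_sdiff_add_card_eq_card hX.1
  omega

lemma mem_rJoin_completeHG_emptyHG_edges {A B f : Finset ℕ} {r : ℕ} :
    f ∈ (rJoin (completeHG A r) (emptyHG B) r).edges ↔
      f ⊆ A ∪ B ∧ f.card = r ∧ (f ∩ A).Nonempty := by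
  rw [rJoin, Finset.mem_union, Finset.mem_union, Finset.mem_filter, Finset.mem_powersetCard]
  simp only [completeHG, emptyHG, Finset.mem_filter,
    Finset.mem_powersetCard, Finset.notMem_empty, or_false]
  constructor
  · rintro (⟨⟨hfA, hcard⟩, hne⟩ | ⟨⟨hsub, hcard⟩, hA, -⟩)
    · exact ⟨hfA.trans Finset.subset_union_left, hcard, by rwa [Finset.inter_eq_left.mpr hfA]⟩
    · exact ⟨hsub, hcard, hA⟩
  · rintro ⟨hsub, hcard, hA⟩
    by_cases hB : (f ∩ B).Nonempty
    · exact .inr ⟨⟨hsub, hcard⟩, hA, hB⟩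
    · have hfA : f ⊆ A := fun x hx =>
        (Finset.mem_union.mp (hsub hx)).resolve_right fun hxB =>
          hB ⟨x, Finset.mem_inter.mpr ⟨hx, hxB⟩⟩
      exact .inl ⟨⟨hfA, hcard⟩, hA.mono Finset.inter_subset_left⟩

lemma card_add_one_le_kappaBar_rJoin_addEdge {A B e : Finset ℕ} {r : ℕ} (hr : 2 ≤ r)
    (he : e ⊆ A ∪ B) (hcard : e.card = r)
    (hnot : e ∉ (rJoin (completeHG A r) (emptyHG B) r).edges) :
    A.card + 1 ≤ ((rJoin (completeHG A r) (emptyHG B) r).addEdge e).kappaBar := by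
  set H := rJoin (completeHG A r) (emptyHG B) r
  have hAe : Disjoint A e := Finset.disjoint_iff_inter_eq_empty.mpr <|
    Finset.not_nonempty_iff_eq_empty.mp fun hAe =>
      hnot (mem_rJoin_completeHG_emptyHG_edges.mpr ⟨he, hcard, Finset.inter_comm e A ▸ hAe⟩)
  have hne : e.Nonempty := Finset.card_pos.mp (by omega)
  have hsub : A ∪ e ⊆ (H.addEdge e).verts := Finset.union_subset Finset.subset_union_left he
  have hV := induce_verts_of_subset hsub
  refine (card_add_one_le_kappa hAe hV ?_ ?_ (hcard ▸ hr)).trans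
    (kappa_le_kappaBar (induce_isSub _ _))
  · exact mem_induce_edges.mpr
      ⟨(mem_addEdge_edges he hne).mpr (.inl rfl), Finset.subset_union_right⟩
  · intro f hf hfcard hfA
    rw [hV] at hf
    have hfH : f ∈ H.edges :=
      mem_rJoin_completeHG_emptyHG_edges.mpr ⟨hf.trans hsub, hfcard.trans hcard, hfA⟩
    exact mem_induce_edges.mpr ⟨(mem_addEdge_edges he hne).mpr (.inr hfH), hf⟩

end FinHypergraph

theorem stmt_6 (k r : ℕ) (hr : 2 ≤ r) (A B : Finset ℕ) (hA : A.card = k) :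
    (FinHypergraph.rJoin (FinHypergraph.completeHG A r) (FinHypergraph.emptyHG B) r).VertexKMaximal r k := by
  subst hA
  open FinHypergraph in
  exact ⟨fun f hf => (mem_rJoin_completeHG_emptyHG_edges.mp hf).2.1,
    kappaBar_le_card_of_forall_edge_meets fun f hf =>
      (mem_rJoin_completeHG_emptyHG_edges.mp hf).2.2,
    fun _ he hcard hnot => card_add_one_le_kappaBar_rJoin_addEdge hr he hcard hnot⟩
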